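/- Finiteness of the reachable abstract state space: fix a program e_pgm and suppose the sets Addr of addresses and Time of timestamps are finite (in particular, the functions alloc and tick have finite codomains). Then the set of CESK*_t states reachable from the initial state ⟨e_pgm, ⊥, ⊥, ε⟩_{t₀} by the CESK*_t step relation is finite. -/
import Mathlib


abbrev Var := ℕ

/-- Expressions of the untyped call-by-value λ-calculus. -/
inductive Expr : Type
  | var : Var → Expr
  | app : Expr → Expr → Expr
  | lam : Var → Expr → Expr

section

variable (Addr Time : Type)

/-- Environments: finite maps from variables to addresses. -/
abbrev Env := Var → Option Addr

/-- Values are closures (λx.e, ρ). -/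
structure Value : Type where
  param : Var
  body : Expr
  env : Env Addr

variable {Addr Time}

def Value.toExpr (v : Value Addr) : Expr := .lam v.param v.body

variable (Addr Time)

/-- Frames φ ::= appL(e,ρ) | appR(v,ρ). -/
inductive Frame : Type
  | appL : Expr → Env Addr → Frame
  | appR : Value Addr → Frame

/-- Store-allocated continuations κ ::= ε | φ·a. -/
inductive Kont : Type
  | eps : Kont
  | cons : Frame Addr → Addr → Kont

/-- Storeables: values or continuations. -/
inductive Storeable : Type
  | val : Value Addr → Storeable
  | kont : Kont Addr → Storeable

/-- Stores: finite maps from addresses to sets of storeables. -/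
abbrev Store := Addr → Set (Storeable Addr)

/-- States of the CESK*_t machine. -/
structure St : Type where
  e : Expr
  ρ : Env Addr
  σ : Store Addr
  κ : Kont Addr
  t : Time

variable {Addr Time}

/-- σ ⊔ [a ↦ s]. -/
def Store.join [DecidableEq Addr] (σ : Store Addr) (a : Addr)
    (s : Storeable Addr) : Store Addr :=
  fun b => if b = a then insert s (σ b) else σ b

/-- ρ[x ↦ a]. -/
def Env.ext (ρ : Env Addr) (x : Var) (a : Addr) : Env Addr :=
  fun y => if y = x then some a else ρ y

/-- The step relation of the CESK*_t machine with store-allocated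
    continuations, parameterized by alloc and tick. -/
inductive Step [DecidableEq Addr] (alloc : St Addr Time → Addr)
    (tick : St Addr Time → Time) : St Addr Time → St Addr Time → Prop
  | var {x ρ σ κ t b v} : ρ x = some b → Storeable.val v ∈ σ b →
      Step alloc tick ⟨.var x, ρ, σ, κ, t⟩
        ⟨v.toExpr, v.env, σ, κ, tick ⟨.var x, ρ, σ, κ, t⟩⟩
  | app {e₀ e₁ ρ σ κ t} :
      Step alloc tick ⟨.app e₀ e₁, ρ, σ, κ, t⟩
        ⟨e₀, ρ, σ.join (alloc ⟨.app e₀ e₁, ρ, σ, κ, t⟩) (.kont κ),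
         .cons (.appL e₁ ρ) (alloc ⟨.app e₀ e₁, ρ, σ, κ, t⟩),
         tick ⟨.app e₀ e₁, ρ, σ, κ, t⟩⟩
  | appL {v : Value Addr} {e ρ σ b t} :
      Step alloc tick ⟨v.toExpr, v.env, σ, .cons (.appL e ρ) b, t⟩
        ⟨e, ρ, σ, .cons (.appR v) b, tick ⟨v.toExpr, v.env, σ, .cons (.appL e ρ) b, t⟩⟩
  | appR {v : Value Addr} {x e ρ σ b t κ} : Storeable.kont κ ∈ σ b →
      Step alloc tick ⟨v.toExpr, v.env, σ, .cons (.appR ⟨x, e, ρ⟩) b, t⟩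
        ⟨e, ρ.ext x (alloc ⟨v.toExpr, v.env, σ, .cons (.appR ⟨x, e, ρ⟩) b, t⟩),
         σ.join (alloc ⟨v.toExpr, v.env, σ, .cons (.appR ⟨x, e, ρ⟩) b, t⟩) (.val v),
         κ, tick ⟨v.toExpr, v.env, σ, .cons (.appR ⟨x, e, ρ⟩) b, t⟩⟩

/-- The initial state ⟨e_pgm, ⊥, ⊥, ε⟩_{t₀}. -/
def initSt (epgm : Expr) (t₀ : Time) : St Addr Time :=
  ⟨epgm, fun _ => none, fun _ => ∅, .eps, t₀⟩

end
/-! ### Auxiliary development -/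

namespace CeskAux

/-- All subexpressions of an expression. -/
def subs : Expr → Set Expr
  | .var x => {.var x}
  | .app e₀ e₁ => insert (.app e₀ e₁) (subs e₀ ∪ subs e₁)
  | .lam x e => insert (.lam x e) (subs e)

/-- All variables (free or bound) of an expression. -/
def vars : Expr → Set Var
  | .var x => {x}
  | .app e₀ e₁ => vars e₀ ∪ vars e₁
  | .lam x e => insert x (vars e)

lemma subs_finite (e : Expr) : (subs e).Finite := by
  induction e with
  | var x => exact Set.finite_singleton _
  | app e₀ e₁ ih₀ ih₁ => exact ((ih₀.union ih₁).insert _)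
  | lam x e ih => exact ih.insert _

lemma vars_finite (e : Expr) : (vars e).Finite := by
  induction e with
  | var x => exact Set.finite_singleton _
  | app e₀ e₁ ih₀ ih₁ => exact ih₀.union ih₁
  | lam x e ih => exact ih.insert _

lemma self_mem_subs (e : Expr) : e ∈ subs e := by
  cases e with
  | var x => exact rfl
  | app e₀ e₁ => exact Set.mem_insert _ _
  | lam x e => exact Set.mem_insert _ _

lemma subs_app {p e₀ e₁ : Expr} (h : Expr.app e₀ e₁ ∈ subs p) :
    e₀ ∈ subs p ∧ e₁ ∈ subs p := by
  induction p with
  | var x => simp [subs] at h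
  | app f₀ f₁ ih₀ ih₁ =>
    rcases h with h | h | h
    · cases h
      exact ⟨Set.mem_insert_iff.2 (Or.inr (Or.inl (self_mem_subs _))),
             Set.mem_insert_iff.2 (Or.inr (Or.inr (self_mem_subs _)))⟩
    · rcases ih₀ h with ⟨a, b⟩
      exact ⟨Set.mem_insert_iff.2 (Or.inr (Or.inl a)),
             Set.mem_insert_iff.2 (Or.inr (Or.inl b))⟩
    · rcases ih₁ h with ⟨a, b⟩
      exact ⟨Set.mem_insert_iff.2 (Or.inr (Or.inr a)),
             Set.mem_insert_iff.2 (Or.inr (Or.inr b))⟩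
  | lam x e ih =>
    rcases h with h | h
    · cases h
    · rcases ih h with ⟨a, b⟩
      exact ⟨Set.mem_insert_iff.2 (Or.inr a), Set.mem_insert_iff.2 (Or.inr b)⟩

lemma subs_lam {p : Expr} {x : Var} {b : Expr} (h : Expr.lam x b ∈ subs p) :
    b ∈ subs p ∧ x ∈ vars p := by
  induction p with
  | var y => simp [subs] at h
  | app f₀ f₁ ih₀ ih₁ =>
    rcases h with h | h | h
    · cases h
    · rcases ih₀ h with ⟨a, c⟩
      exact ⟨Set.mem_insert_iff.2 (Or.inr (Or.inl a)), Or.inl c⟩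
    · rcases ih₁ h with ⟨a, c⟩
      exact ⟨Set.mem_insert_iff.2 (Or.inr (Or.inr a)), Or.inr c⟩
  | lam y e ih =>
    rcases h with h | h
    · injection h with h1 h2
      subst h1; subst h2
      exact ⟨Set.mem_insert_iff.2 (Or.inr (self_mem_subs _)), Set.mem_insert _ _⟩
    · rcases ih h with ⟨a, c⟩
      exact ⟨Set.mem_insert_iff.2 (Or.inr a), Set.mem_insert_iff.2 (Or.inr c)⟩

variable {Addr Time : Type}

/-- Good environments: supported on `vars p`. -/
def GEnv (p : Expr) (ρ : Env Addr) : Prop := ∀ y, y ∉ vars p → ρ y = none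

/-- Good values. -/
def GVal (p : Expr) (v : Value Addr) : Prop := v.toExpr ∈ subs p ∧ GEnv p v.env

/-- Good frames. -/
def GFrame (p : Expr) : Frame Addr → Prop
  | .appL e ρ => e ∈ subs p ∧ GEnv p ρ
  | .appR v => GVal p v

/-- Good continuations. -/
def GKont (p : Expr) : Kont Addr → Prop
  | .eps => True
  | .cons φ _ => GFrame p φ

/-- Good storeables. -/
def GStb (p : Expr) : Storeable Addr → Prop
  | .val v => GVal p v
  | .kont κ => GKont p κ

/-- Good stores. -/
def GStore (p : Expr) (σ : Store Addr) : Prop := ∀ a s, s ∈ σ a → GStb p s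

/-- Good states. -/
def GSt (p : Expr) (ς : St Addr Time) : Prop :=
  ς.e ∈ subs p ∧ GEnv p ς.ρ ∧ GStore p ς.σ ∧ GKont p ς.κ

section Finiteness

variable [Finite Addr] [Finite Time] (p : Expr)

lemma genv_finite : {ρ : Env Addr | GEnv p ρ}.Finite := by
  haveI := (vars_finite p).to_subtype
  haveI := Fintype.ofFinite Addr
  apply Set.Finite.of_finite_image (f := fun ρ (y : vars p) => ρ y)
  · exact Set.Finite.subset (Set.finite_univ) (Set.subset_univ _)
  · intro ρ hρ ρ' hρ' h
    funext y
    by_cases hy : y ∈ vars p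
    · exact congrFun h ⟨y, hy⟩
    · rw [hρ y hy, hρ' y hy]

lemma gval_finite : {v : Value Addr | GVal p v}.Finite := by
  apply Set.Finite.of_finite_image (f := fun v : Value Addr => (v.toExpr, v.env))
  · apply Set.Finite.subset ((subs_finite p).prod (genv_finite p))
    rintro z ⟨v, hv, rfl⟩
    exact ⟨hv.1, hv.2⟩
  · rintro ⟨x, b, ρ⟩ _ ⟨x', b', ρ'⟩ _ h
    simp only [Value.toExpr, Prod.mk.injEq, Expr.lam.injEq] at h
    obtain ⟨⟨rfl, rfl⟩, rfl⟩ := h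
    rfl

lemma gframe_finite : {φ : Frame Addr | GFrame p φ}.Finite := by
  apply Set.Finite.of_finite_image
    (f := fun φ : Frame Addr =>
      match φ with
      | .appL e ρ => Sum.inl (e, ρ)
      | .appR v => Sum.inr v)
  · apply Set.Finite.subset
      ((((subs_finite p).prod (genv_finite p)).image Sum.inl).union
        ((gval_finite p).image Sum.inr))
    rintro z ⟨φ, hφ, rfl⟩
    cases φ with
    | appL e ρ => exact Or.inl ⟨(e, ρ), ⟨hφ.1, hφ.2⟩, rfl⟩
    | appR v => exact Or.inr ⟨v, hφ, rfl⟩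
  · rintro (⟨e, ρ⟩ | v) _ (⟨e', ρ'⟩ | v') _ h <;> simp_all

lemma gkont_finite : {κ : Kont Addr | GKont p κ}.Finite := by
  apply Set.Finite.of_finite_image
    (f := fun κ : Kont Addr =>
      match κ with
      | .eps => none
      | .cons φ a => some (φ, a))
  · apply Set.Finite.subset
      ((((gframe_finite p).prod Set.finite_univ).image some).insert none)
    rintro z ⟨κ, hκ, rfl⟩
    cases κ with
    | eps => exact Set.mem_insert _ _
    | cons φ a => exact Set.mem_insert_iff.2 (Or.inr ⟨(φ, a), ⟨hκ, trivial⟩, rfl⟩)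
  · rintro (_ | ⟨φ, a⟩) _ (_ | ⟨φ', a'⟩) _ h <;> simp_all

lemma gstb_finite : {s : Storeable Addr | GStb p s}.Finite := by
  apply Set.Finite.of_finite_image
    (f := fun s : Storeable Addr =>
      match s with
      | .val v => Sum.inl v
      | .kont κ => Sum.inr κ)
  · apply Set.Finite.subset
      (((gval_finite p).image Sum.inl).union ((gkont_finite p).image Sum.inr))
    rintro z ⟨s, hs, rfl⟩
    cases s with
    | val v => exact Or.inl ⟨v, hs, rfl⟩
    | kont κ => exact Or.inr ⟨κ, hs, rfl⟩
  · rintro (v | κ) _ (v' | κ') _ h <;> simp_all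

lemma gstore_finite : {σ : Store Addr | GStore p σ}.Finite := by
  haveI := (gstb_finite (Addr := Addr) p).to_subtype
  apply Set.Finite.of_finite_image
    (f := fun (σ : Store Addr) (a : Addr)
      (s : {s : Storeable Addr | GStb p s}) => (s : Storeable Addr) ∈ σ a)
  · exact Set.Finite.subset (Set.finite_univ) (Set.subset_univ _)
  · intro σ hσ σ' hσ' h
    funext a
    ext s
    constructor
    · intro hs
      have := congrFun (congrFun h a) ⟨s, hσ a s hs⟩
      exact this.mp hs
    · intro hs
      have := congrFun (congrFun h a) ⟨s, hσ' a s hs⟩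
      exact this.mpr hs

lemma gst_finite : {ς : St Addr Time | GSt p ς}.Finite := by
  apply Set.Finite.of_finite_image
    (f := fun ς : St Addr Time => (ς.e, ς.ρ, ς.σ, ς.κ, ς.t))
  · apply Set.Finite.subset
      ((subs_finite p).prod ((genv_finite p).prod ((gstore_finite p).prod
        ((gkont_finite p).prod Set.finite_univ))))
    rintro z ⟨ς, hς, rfl⟩
    exact ⟨hς.1, hς.2.1, hς.2.2.1, hς.2.2.2, trivial⟩
  · rintro ⟨e, ρ, σ, κ, t⟩ _ ⟨e', ρ', σ', κ', t'⟩ _ h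
    simp_all

end Finiteness

section Invariant

variable [DecidableEq Addr] {p : Expr} {alloc : St Addr Time → Addr}
  {tick : St Addr Time → Time}

lemma step_preserves {ς ς' : St Addr Time}
    (h : Step alloc tick ς ς') (hg : GSt p ς) : GSt p ς' := by
  obtain ⟨he, hρ, hσ, hκ⟩ := hg
  cases h with
  | @var x ρ σ κ t b v hb hv =>
    have hgv : GVal p v := hσ b _ hv
    exact ⟨hgv.1, hgv.2, hσ, hκ⟩
  | @app e₀ e₁ ρ σ κ t =>
    obtain ⟨h₀, h₁⟩ := subs_app he
    refine ⟨h₀, hρ, ?_, ⟨h₁, hρ⟩⟩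
    intro a s hs
    simp only [Store.join] at hs
    split at hs
    · rcases hs with rfl | hs
      · exact hκ
      · exact hσ _ _ hs
    · exact hσ _ _ hs
  | @appL v e ρ σ b t =>
    exact ⟨hκ.1, hκ.2, hσ, ⟨he, hρ⟩⟩
  | @appR v x e ρ σ b t κ hk =>
    have hgv : GVal p (⟨x, e, ρ⟩ : Value Addr) := hκ
    obtain ⟨hb, hx⟩ := subs_lam hgv.1
    refine ⟨hb, ?_, ?_, hσ b _ hk⟩
    · intro y hy
      simp only [Env.ext]
      rw [if_neg (show ¬ y = x from fun hxy => hy (by rw [hxy]; exact hx))]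
      exact hgv.2 y hy
    · intro a s hs
      simp only [Store.join] at hs
      split at hs
      · rcases hs with rfl | hs
        · exact ⟨he, hρ⟩
        · exact hσ _ _ hs
      · exact hσ _ _ hs

end Invariant

end CeskAux
/-- Finiteness of the reachable abstract state space: with finitely many
    addresses and timestamps, the set of CESK*_t states reachable from the
    initial state is finite. -/
theorem reachable_states_finite
    (Addr Time : Type) [Finite Addr] [Finite Time] [DecidableEq Addr]
    (alloc : St Addr Time → Addr) (tick : St Addr Time → Time)
    (epgm : Expr) (t₀ : Time) :
    {ς : St Addr Time |
      Relation.ReflTransGen (Step alloc tick) (initSt epgm t₀) ς}.Finite := by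
  apply Set.Finite.subset (CeskAux.gst_finite (Addr := Addr) (Time := Time) epgm)
  intro ς hς
  induction hς with
  | refl =>
    exact ⟨CeskAux.self_mem_subs _, fun y _ => rfl, fun a s hs => hs.elim, trivial⟩
  | tail _ hstep ih => exact CeskAux.step_preserves hstep ih
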